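/- arXiv:1802.08671 — 2 statements merged into one kernel-verified Lean document; each statement's English description precedes it below -/
import Mathlib

section
/- Let f : ℝ^d → ℝ be differentiable with M-Lipschitz gradient (‖∇f(x) − ∇f(y)‖ ≤ M‖x−y‖ for all x,y) and let g : ℝ^d → ℝ be L-Lipschitz (|g(x) − g(y)| ≤ L‖x−y‖ for all x,y). Set V = f + g. Let X be an ℝ^d-valued random variable and η ~ N(0, 2h·I_d) independent of X, for some h > 0, with V(X), V(X+η) and ∇f(X) integrable. Then E[V(X+η)] − E[V(X)] ≤ M·h·d + L·√(2hd). -/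
open MeasureTheory Filter Set

noncomputable section

/-- Euclidean space `ℝ^d`. -/
abbrev Euc (d : ℕ) := EuclideanSpace ℝ (Fin d)

/-- The squared 2-Wasserstein distance between two measures on `ℝ^d`:
the infimum over couplings of the expected squared distance. -/
noncomputable def W2sq {d : ℕ} (μ ν : Measure (Euc d)) : ℝ :=
  (⨅ γ ∈ {γ : Measure (Euc d × Euc d) |
      γ.map Prod.fst = μ ∧ γ.map Prod.snd = ν},
    ∫⁻ p, (‖p.1 - p.2‖₊ : ENNReal) ^ 2 ∂γ).toReal

/-- The 2-Wasserstein distance. -/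
noncomputable def W2 {d : ℕ} (μ ν : Measure (Euc d)) : ℝ :=
  Real.sqrt (W2sq μ ν)

/-- The relative entropy (KL divergence) `H(ρ | π) = ∫ log (dρ/dπ) dρ`. -/
noncomputable def relEnt {d : ℕ} (ρ π : Measure (Euc d)) : ℝ :=
  ∫ x, Real.log ((ρ.rnDeriv π x).toReal) ∂ρ

/-- `H(ρ | π)` is well defined and finite: `ρ ≪ π` and `log (dρ/dπ)` is `ρ`-integrable. -/
def RelEntFinite {d : ℕ} (ρ π : Measure (Euc d)) : Prop :=
  ρ ≪ π ∧ Integrable (fun x => Real.log ((ρ.rnDeriv π x).toReal)) ρ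

/-- The centered Gaussian measure on `ℝ^d` with covariance `s·I_d`. -/
noncomputable def gaussCov (d : ℕ) (s : ℝ) : Measure (Euc d) :=
  volume.withDensity fun x =>
    ENNReal.ofReal ((2 * Real.pi * s) ^ (-(d : ℝ) / 2) * Real.exp (-‖x‖ ^ 2 / (2 * s)))

/-- Convolution of two measures on `ℝ^d`. -/
noncomputable def mconv {d : ℕ} (μ ν : Measure (Euc d)) : Measure (Euc d) :=
  Measure.map (fun p : Euc d × Euc d => p.1 + p.2) (μ.prod ν)

/-- `prox` is the proximal map of `V` with step `h`:
`prox x` minimizes `y ↦ V y + ‖x - y‖² / (2h)`. -/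
def IsProxMap {d : ℕ} (V : Euc d → ℝ) (h : ℝ) (prox : Euc d → Euc d) : Prop :=
  Measurable prox ∧
    ∀ x y, V (prox x) + ‖x - prox x‖ ^ 2 / (2 * h) ≤ V y + ‖x - y‖ ^ 2 / (2 * h)

/-- The proximal splitting scheme: `ρ_h^0 = ρ₀`,
`ρ_h^{k+1} = φ_h * (prox_V^h)_# ρ_h^k` (transport step then heat step,
where `φ_h` is the Gaussian with covariance `2h·I_d`). -/
noncomputable def scheme {d : ℕ} (prox : Euc d → Euc d) (h : ℝ)
    (ρ0 : Measure (Euc d)) : ℕ → Measure (Euc d)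
  | 0 => ρ0
  | k + 1 => mconv ((scheme prox h ρ0 k).map prox) (gaussCov d (2 * h))

/-- The half step `ρ_h^{k+1/2} = (prox_V^h)_# ρ_h^k`. -/
noncomputable def halfStep {d : ℕ} (prox : Euc d → Euc d) (h : ℝ)
    (ρ0 : Measure (Euc d)) (k : ℕ) : Measure (Euc d) :=
  (scheme prox h ρ0 k).map prox

/-- `δ_h^{k+1} = ∫ V dρ_h^{k+1} − ∫ V dρ_h^{k+1/2}` (here `deltaV ... k = δ_h^{k+1}`). -/
noncomputable def deltaV {d : ℕ} (V : Euc d → ℝ) (prox : Euc d → Euc d) (h : ℝ)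
    (ρ0 : Measure (Euc d)) (k : ℕ) : ℝ :=
  (∫ x, V x ∂(scheme prox h ρ0 (k + 1))) - ∫ x, V x ∂(halfStep prox h ρ0 k)

/-- `Δ_h^n = Σ_{j=1}^n δ_h^j`. -/
noncomputable def DeltaV {d : ℕ} (V : Euc d → ℝ) (prox : Euc d → Euc d) (h : ℝ)
    (ρ0 : Measure (Euc d)) (n : ℕ) : ℝ :=
  ∑ j ∈ Finset.range n, deltaV V prox h ρ0 j

/-- The piecewise-constant interpolation `ρ^h(t) = ρ_h^{k+1}` for `t ∈ (kh, (k+1)h]`,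
with `ρ^h(0) = ρ₀`. -/
noncomputable def interp {d : ℕ} (prox : Euc d → Euc d) (h : ℝ)
    (ρ0 : Measure (Euc d)) (t : ℝ) : Measure (Euc d) :=
  scheme prox h ρ0 ⌈t / h⌉₊

/-- `ℓ_h(t) = (t − kh)/h` for `t ∈ [kh, (k+1)h)`. -/
noncomputable def ellh (h t : ℝ) : ℝ := t / h - (⌊t / h⌋₊ : ℝ)

/-- `W²_h(t, ν) = (1 − ℓ_h(t))·W₂²(ρ_h^k, ν) + ℓ_h(t)·W₂²(ρ_h^{k+1}, ν)`
for `t ∈ [kh, (k+1)h)`. -/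
noncomputable def Wh2 {d : ℕ} (prox : Euc d → Euc d) (h : ℝ) (ρ0 : Measure (Euc d))
    (ν : Measure (Euc d)) (t : ℝ) : ℝ :=
  (1 - ellh h t) * W2sq (scheme prox h ρ0 ⌊t / h⌋₊) ν
    + ellh h t * W2sq (scheme prox h ρ0 (⌊t / h⌋₊ + 1)) ν

/-- `H_h(t) = (1 − ℓ_h(t))·H(ρ_h^k | π) + ℓ_h(t)·H(ρ_h^{k+1} | π)` for `t ∈ [kh, (k+1)h)`. -/
noncomputable def Hh {d : ℕ} (prox : Euc d → Euc d) (h : ℝ) (ρ0 : Measure (Euc d))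
    (π : Measure (Euc d)) (t : ℝ) : ℝ :=
  (1 - ellh h t) * relEnt (scheme prox h ρ0 ⌊t / h⌋₊) π
    + ellh h t * relEnt (scheme prox h ρ0 (⌊t / h⌋₊ + 1)) π

/-- `R_h(t) = 2(1 − ℓ_h(t))·(H(ρ_h^k|π) − H(ρ_h^{k+1}|π) + δ_h^{k+1}) + 2ℓ_h(t)·δ_h^{k+1}`
for `t ∈ [kh, (k+1)h)`. -/
noncomputable def Rh {d : ℕ} (V : Euc d → ℝ) (prox : Euc d → Euc d) (h : ℝ)
    (ρ0 : Measure (Euc d)) (π : Measure (Euc d)) (t : ℝ) : ℝ :=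
  2 * (1 - ellh h t) *
      (relEnt (scheme prox h ρ0 ⌊t / h⌋₊) π - relEnt (scheme prox h ρ0 (⌊t / h⌋₊ + 1)) π
        + deltaV V prox h ρ0 ⌊t / h⌋₊)
    + 2 * ellh h t * deltaV V prox h ρ0 ⌊t / h⌋₊

/-- The doubly interpolated squared Wasserstein distance
`W²_{h,r}(t,s) = (1 − ℓ_r(s))·W²_h(t, γ_r(s)) + ℓ_r(s)·W²_h(t, γ^r(s))`. -/
noncomputable def Whr2 {d : ℕ} (proxh : Euc d → Euc d) (h : ℝ) (ρ0 : Measure (Euc d))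
    (proxr : Euc d → Euc d) (r : ℝ) (γ0 : Measure (Euc d)) (t s : ℝ) : ℝ :=
  (1 - ellh r s) * Wh2 proxh h ρ0 (scheme proxr r γ0 ⌊s / r⌋₊) t
    + ellh r s * Wh2 proxh h ρ0 (scheme proxr r γ0 (⌊s / r⌋₊ + 1)) t

/-- `ρ : (0,∞) → P₂(ℝ^d)` is the gradient flow of `ρ ↦ H(ρ|π)` started from `ρ₀`,
in the EVI sense with modulus `lam`. -/
def IsGradientFlow {d : ℕ} (lam : ℝ) (π ρ0 : Measure (Euc d))
    (ρ : ℝ → Measure (Euc d)) : Prop :=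
  (∀ t, 0 < t → IsProbabilityMeasure (ρ t) ∧ Integrable (fun x => ‖x‖ ^ 2) (ρ t)) ∧
  (∀ s, 0 < s →
    Tendsto (fun t => W2 (ρ t) (ρ s)) (nhdsWithin s (Set.Ioi 0)) (nhds 0)) ∧
  Tendsto (fun t => W2 (ρ t) ρ0) (nhdsWithin 0 (Set.Ioi 0)) (nhds 0) ∧
  ∀ ν : Measure (Euc d), IsProbabilityMeasure ν → Integrable (fun x => ‖x‖ ^ 2) ν →
    RelEntFinite ν π →
    ∀ f : ℝ → ℝ, ContDiff ℝ (⊤ : ℕ∞) f → HasCompactSupport f → tsupport f ⊆ Set.Ioi 0 →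
      (∀ t, 0 ≤ f t) →
      -(1 / 2) * ∫ t in Set.Ioi (0 : ℝ), W2sq (ρ t) ν * deriv f t ≤
        ∫ t in Set.Ioi (0 : ℝ),
          (relEnt ν π - relEnt (ρ t) π - lam / 2 * W2sq (ρ t) ν) * f t

end

open MeasureTheory Filter Set

open Real


lemma aux_integrable_sq_mul_exp {b : ℝ} (hb : 0 < b) :
    Integrable fun x : ℝ => x ^ 2 * Real.exp (-b * x ^ 2) := by
  have h := integrable_rpow_mul_exp_neg_mul_sq hb (s := 2) (by norm_num)
  have h2 : ∀ x : ℝ, x ^ (2 : ℝ) = x ^ (2 : ℕ) := fun x => by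
    rw [← Real.rpow_natCast x 2]; norm_num
  simpa [h2] using h

lemma aux_sq_moment {b : ℝ} (hb : 0 < b) :
    ∫ x : ℝ, x ^ 2 * Real.exp (-b * x ^ 2)
      = (∫ x : ℝ, Real.exp (-b * x ^ 2)) / (2 * b) := by
  have hd : ∀ x : ℝ, HasDerivAt (fun y : ℝ => y * Real.exp (-b * y ^ 2))
      (Real.exp (-b * x ^ 2) - 2 * b * (x ^ 2 * Real.exp (-b * x ^ 2))) x := by
    intro x
    have h1 : HasDerivAt (fun y : ℝ => -b * y ^ 2) (-b * (2 * x)) x := by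
      simpa using (hasDerivAt_pow 2 x).const_mul (-b)
    have h3 := (hasDerivAt_id x).mul h1.exp
    refine h3.congr_deriv ?_
    simp only [id_eq, one_mul]
    ring
  have hint : Integrable fun x : ℝ =>
      Real.exp (-b * x ^ 2) - 2 * b * (x ^ 2 * Real.exp (-b * x ^ 2)) :=
    (integrable_exp_neg_mul_sq hb).sub ((aux_integrable_sq_mul_exp hb).const_mul _)
  have h0 := integral_eq_zero_of_hasDerivAt_of_integrable hd hint
    (integrable_mul_exp_neg_mul_sq hb)
  rw [integral_sub (integrable_exp_neg_mul_sq hb)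
    ((aux_integrable_sq_mul_exp hb).const_mul _), integral_const_mul] at h0
  rw [eq_div_iff (by positivity : (2 : ℝ) * b ≠ 0)]
  linarith

lemma aux_mean_zero {b : ℝ} (hb : 0 < b) :
    ∫ x : ℝ, x * Real.exp (-b * x ^ 2) = 0 := by
  have hd : ∀ x : ℝ, HasDerivAt (fun y : ℝ => -(2 * b)⁻¹ * Real.exp (-b * y ^ 2))
      (x * Real.exp (-b * x ^ 2)) x := by
    intro x
    have h1 : HasDerivAt (fun y : ℝ => -b * y ^ 2) (-b * (2 * x)) x := by
      simpa using (hasDerivAt_pow 2 x).const_mul (-b)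
    have h2 := h1.exp.const_mul (-(2 * b)⁻¹)
    refine h2.congr_deriv ?_
    field_simp
  exact integral_eq_zero_of_hasDerivAt_of_integrable hd
    (integrable_mul_exp_neg_mul_sq hb) ((integrable_exp_neg_mul_sq hb).const_mul _)

lemma aux_gaussCov_facts (d : ℕ) (s : ℝ) (hs : 0 < s)
    (hprob : IsProbabilityMeasure (gaussCov d s)) :
    Integrable (fun x : Euc d => ‖x‖ ^ 2) (gaussCov d s) ∧
    (∫ x : Euc d, ‖x‖ ^ 2 ∂gaussCov d s) = s * d ∧
    (∀ i : Fin d, Integrable (fun x : Euc d => x i) (gaussCov d s)) ∧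
    (∀ i : Fin d, (∫ x : Euc d, x i ∂gaussCov d s) = 0) := by
  classical
  set b : ℝ := 1 / (2 * s) with hbdef
  have hb : 0 < b := by positivity
  set C : ℝ := (2 * Real.pi * s) ^ (-(d : ℝ) / 2) with hCdef
  have hCpos : 0 < C := Real.rpow_pos_of_pos (by positivity) _
  have hρ : ∀ x : Euc d,
      C * Real.exp (-‖x‖ ^ 2 / (2 * s)) = C * Real.exp (-b * ‖x‖ ^ 2) := by
    intro x
    congr 1
    rw [hbdef]
    ring_nf
  have hmeasρ : Measurable fun x : Euc d => C * Real.exp (-b * ‖x‖ ^ 2) :=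
    (((measurable_norm.pow_const 2).const_mul (-b)).exp.const_mul C)
  have hgauss : gaussCov d s
      = volume.withDensity fun x : Euc d =>
          ((C * Real.exp (-b * ‖x‖ ^ 2)).toNNReal : ENNReal) := by
    rw [gaussCov]
    congr 1
    funext x
    rw [← hCdef, hρ x]
    rfl
  have hint_eq : ∀ g : Euc d → ℝ,
      (∫ x, g x ∂gaussCov d s)
        = ∫ x : Euc d, C * Real.exp (-b * ‖x‖ ^ 2) * g x := by
    intro g
    rw [hgauss, integral_withDensity_eq_integral_smul hmeasρ.real_toNNReal]
    congr 1
    funext x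
    rw [NNReal.smul_def, Real.coe_toNNReal _ (by positivity)]
    rfl
  have hint_iff : ∀ g : Euc d → ℝ,
      Integrable (fun x : Euc d => C * Real.exp (-b * ‖x‖ ^ 2) * g x) volume →
      Integrable g (gaussCov d s) := by
    intro g hg
    rw [hgauss, integrable_withDensity_iff_integrable_smul hmeasρ.real_toNNReal]
    convert hg using 1
    · rfl
    funext x
    rw [NNReal.smul_def, Real.coe_toNNReal _ (by positivity)]
    rfl
  -- transfer to pi
  set e := (MeasurableEquiv.toLp 2 (Fin d → ℝ)).symm with hedef
  have hmp := (EuclideanSpace.volume_preserving_symm_measurableEquiv_toLp (Fin d)).symm (MeasurableEquiv.toLp 2 (Fin d → ℝ)).symm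
  have htrans : ∀ G : Euc d → ℝ,
      (∫ x : Euc d, G x) = ∫ y : Fin d → ℝ, G (e.symm y) := by
    intro G
    exact (hmp.integral_comp' G).symm
  have htransInt : ∀ G : Euc d → ℝ, Integrable (fun y : Fin d → ℝ => G (e.symm y)) volume →
      Integrable G volume := by
    intro G hG
    exact (hmp.integrable_comp_emb e.symm.measurableEmbedding).mp hG
  have hcoord : ∀ (y : Fin d → ℝ) (i : Fin d), (e.symm y) i = y i := fun y i => rfl
  have hnormsq : ∀ y : Fin d → ℝ, ‖e.symm y‖ ^ 2 = ∑ i, y i ^ 2 := by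
    intro y
    rw [EuclideanSpace.norm_eq, Real.sq_sqrt (Finset.sum_nonneg fun i _ => sq_nonneg _)]
    simp [hcoord, sq_abs]
  have hexpprod : ∀ y : Fin d → ℝ,
      Real.exp (-b * ∑ i, y i ^ 2) = ∏ i, Real.exp (-b * y i ^ 2) := by
    intro y
    rw [← Real.exp_sum, Finset.mul_sum]
  set q := ∫ x : ℝ, Real.exp (-b * x ^ 2) with hqdef
  have hq : 0 < q := by rw [hqdef, integral_gaussian]; positivity
  have hprodint : (∫ y : Fin d → ℝ, ∏ i, Real.exp (-b * y i ^ 2)) = q ^ d := by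
    rw [MeasureTheory.integral_fintype_prod_volume_eq_pow (ι := Fin d)
      (fun x : ℝ => Real.exp (-b * x ^ 2)), Fintype.card_fin, hqdef]
  have hone : C * q ^ d = 1 := by
    have h1 : (∫ _x : Euc d, (1 : ℝ) ∂gaussCov d s) = 1 := by simp
    rw [hint_eq (fun _ => (1 : ℝ)), htrans] at h1
    rw [← hprodint, ← integral_const_mul, ← h1]
    congr 1; funext y
    rw [mul_one, hnormsq y, hexpprod y]
  -- second moment
  set F : Fin d → Fin d → ℝ → ℝ :=
    fun i j x => (if j = i then x ^ 2 else 1) * Real.exp (-b * x ^ 2) with hFdef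
  have hFint : ∀ i j, Integrable (F i j) volume := by
    intro i j
    by_cases hji : j = i
    · simpa [hFdef, hji] using aux_integrable_sq_mul_exp hb
    · simpa [hFdef, hji] using integrable_exp_neg_mul_sq hb
  have hFsum : ∀ y : Fin d → ℝ,
      C * Real.exp (-b * ‖e.symm y‖ ^ 2) * ‖e.symm y‖ ^ 2
        = ∑ i, C * ∏ j, F i j (y j) := by
    intro y
    have hFprod : ∀ i : Fin d,
        (∏ j, F i j (y j)) = y i ^ 2 * ∏ j, Real.exp (-b * y j ^ 2) := by
      intro i
      rw [hFdef, Finset.prod_mul_distrib]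
      congr 1
      simp
    simp only [hFprod]
    rw [hnormsq y, hexpprod y, Finset.mul_sum]
    exact Finset.sum_congr rfl fun i _ => by ring
  have hFI : ∀ i : Fin d, (∫ y : Fin d → ℝ, ∏ j, F i j (y j)) = s * q ^ d := by
    intro i
    rw [MeasureTheory.integral_fintype_prod_volume_eq_prod (ι := Fin d) (F i)]
    have hvals : ∀ j, (∫ x : ℝ, F i j x) = if j = i then s * q else q := by
      intro j
      by_cases hji : j = i
      · rw [if_pos hji]
        have : (∫ x : ℝ, F i j x) = ∫ x : ℝ, x ^ 2 * Real.exp (-b * x ^ 2) := by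
          congr 1; funext x; rw [hFdef]; simp [hji]
        rw [this, aux_sq_moment hb, ← hqdef, hbdef]
        field_simp
      · rw [if_neg hji]
        have : (∫ x : ℝ, F i j x) = ∫ x : ℝ, Real.exp (-b * x ^ 2) := by
          congr 1; funext x; rw [hFdef]; simp [hji]
        rw [this, hqdef]
    rw [Finset.prod_congr rfl fun j _ => hvals j]
    rw [← Finset.mul_prod_erase Finset.univ _ (Finset.mem_univ i), if_pos rfl]
    have herase : ∀ j ∈ Finset.univ.erase i, (if j = i then s * q else q) = q :=
      fun j hj => if_neg (Finset.ne_of_mem_erase hj)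
    rw [Finset.prod_congr rfl herase, Finset.prod_const,
      Finset.card_erase_of_mem (Finset.mem_univ i), Finset.card_univ, Fintype.card_fin]
    have hd1 : d - 1 + 1 = d := Nat.succ_pred_eq_of_pos i.pos
    calc s * q * q ^ (d - 1) = s * q ^ (d - 1 + 1) := by ring
      _ = s * q ^ d := by rw [hd1]
  have hintpi : Integrable
      (fun y : Fin d → ℝ => C * Real.exp (-b * ‖e.symm y‖ ^ 2) * ‖e.symm y‖ ^ 2) volume := by
    have h1 : Integrable (fun y : Fin d → ℝ => ∑ i, C * ∏ j, F i j (y j)) volume :=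
      integrable_finset_sum _ fun i _ =>
        (MeasureTheory.Integrable.fintype_prod (f := F i) (fun j => hFint i j)).const_mul C
    exact h1.congr (Filter.EventuallyEq.symm (Filter.Eventually.of_forall hFsum))
  have hE2 : (∫ x : Euc d, ‖x‖ ^ 2 ∂gaussCov d s) = s * d := by
    rw [hint_eq (fun x => ‖x‖ ^ 2), htrans]
    rw [integral_congr_ae (Filter.Eventually.of_forall hFsum)]
    rw [integral_finset_sum (μ := (volume : Measure (Fin d → ℝ))) _ (fun i _ =>
      (MeasureTheory.Integrable.fintype_prod (f := F i) (fun j => hFint i j)).const_mul C)]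
    have hterm : ∀ i : Fin d, (∫ y : Fin d → ℝ, C * ∏ j, F i j (y j)) = C * (s * q ^ d) := by
      intro i; rw [integral_const_mul, hFI i]
    rw [Finset.sum_congr rfl fun i _ => hterm i, Finset.sum_const, Finset.card_univ,
      Fintype.card_fin, nsmul_eq_mul]
    linear_combination (s * (d : ℝ)) * hone
  have hI2 : Integrable (fun x : Euc d => ‖x‖ ^ 2) (gaussCov d s) := by
    apply hint_iff
    exact htransInt _ hintpi
  -- first moments
  set G : Fin d → Fin d → ℝ → ℝ :=
    fun i j x => (if j = i then x else 1) * Real.exp (-b * x ^ 2) with hGdef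
  have hGint : ∀ i j, Integrable (G i j) volume := by
    intro i j
    by_cases hji : j = i
    · simpa [hGdef, hji] using integrable_mul_exp_neg_mul_sq hb
    · simpa [hGdef, hji] using integrable_exp_neg_mul_sq hb
  have hGsum : ∀ (i : Fin d) (y : Fin d → ℝ),
      C * Real.exp (-b * ‖e.symm y‖ ^ 2) * (e.symm y) i
        = C * ∏ j, G i j (y j) := by
    intro i y
    have hGprod : (∏ j, G i j (y j)) = y i * ∏ j, Real.exp (-b * y j ^ 2) := by
      rw [hGdef, Finset.prod_mul_distrib]
      congr 1
      simp
    rw [hGprod, hnormsq y, hexpprod y, hcoord y i]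
    ring
  have hIi : ∀ i : Fin d, Integrable (fun x : Euc d => x i) (gaussCov d s) := by
    intro i
    apply hint_iff
    apply htransInt
    have h1 : Integrable (fun y : Fin d → ℝ => C * ∏ j, G i j (y j)) volume :=
      (MeasureTheory.Integrable.fintype_prod (f := G i) (fun j => hGint i j)).const_mul C
    exact h1.congr (Filter.EventuallyEq.symm (Filter.Eventually.of_forall (hGsum i)))
  have hEi : ∀ i : Fin d, (∫ x : Euc d, x i ∂gaussCov d s) = 0 := by
    intro i
    rw [hint_eq (fun x => x i), htrans]
    rw [integral_congr_ae (Filter.Eventually.of_forall (hGsum i))]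
    rw [integral_const_mul, MeasureTheory.integral_fintype_prod_volume_eq_prod (ι := Fin d) (G i)]
    rw [Finset.prod_eq_zero (Finset.mem_univ i)
      (by rw [hGdef]; simpa using aux_mean_zero hb)]
    ring
  exact ⟨hI2, hE2, hIi, hEi⟩

set_option maxHeartbeats 1000000 in
lemma aux_descent {d : ℕ} (f : Euc d → ℝ) (M : ℝ) (hM : 0 ≤ M)
    (hfd : Differentiable ℝ f)
    (hfl : ∀ x y, ‖gradient f x - gradient f y‖ ≤ M * ‖x - y‖) (x v : Euc d) :
    f (x + v) ≤ f x + (inner ℝ (gradient f x) v : ℝ) + M / 2 * ‖v‖ ^ 2 := by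
  have hgradlip : LipschitzWith M.toNNReal (gradient f) :=
    LipschitzWith.of_dist_le_mul fun a b => by
      simpa [dist_eq_norm, Real.coe_toNNReal M hM] using hfl a b
  have hgradcont : Continuous (gradient f) := hgradlip.continuous
  have hc : ∀ t : ℝ, HasDerivAt (fun t : ℝ => x + t • v) v t := fun t => by
    simpa using ((hasDerivAt_id t).smul_const v).const_add x
  have hderiv : ∀ t : ℝ, HasDerivAt (fun t : ℝ => f (x + t • v))
      ((inner ℝ (gradient f (x + t • v)) v : ℝ)) t := by
    intro t
    have hg : HasFDerivAt f
        (InnerProductSpace.toDual ℝ (Euc d) (gradient f (x + t • v))) (x + t • v) :=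
      hasGradientAt_iff_hasFDerivAt.mp (hfd _).hasGradientAt
    have := hg.comp_hasDerivAt t (hc t)
    simp [InnerProductSpace.toDual_apply_apply] at this ⊢
    exact this
  have hcont : Continuous fun t : ℝ => (inner ℝ (gradient f (x + t • v)) v : ℝ) := by
    apply Continuous.inner
    · exact hgradcont.comp (by continuity)
    · exact continuous_const
  have key : (∫ t in (0 : ℝ)..1, (inner ℝ (gradient f (x + t • v)) v : ℝ))
      = f (x + v) - f x := by
    have := intervalIntegral.integral_eq_sub_of_hasDerivAt
      (f := fun t : ℝ => f (x + t • v)) (fun t _ => hderiv t)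
      (hcont.intervalIntegrable 0 1)
    simpa using this
  have hb : ∀ t ∈ Set.Icc (0 : ℝ) 1,
      (inner ℝ (gradient f (x + t • v)) v : ℝ)
        ≤ (inner ℝ (gradient f x) v : ℝ) + M * t * ‖v‖ ^ 2 := by
    intro t ht
    have h1 : (inner ℝ (gradient f (x + t • v)) v : ℝ) - (inner ℝ (gradient f x) v : ℝ)
        = (inner ℝ (gradient f (x + t • v) - gradient f x) v : ℝ) := by
      rw [inner_sub_left]
    have h2 : (inner ℝ (gradient f (x + t • v) - gradient f x) v : ℝ)
        ≤ ‖gradient f (x + t • v) - gradient f x‖ * ‖v‖ := real_inner_le_norm _ _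
    have h3 : ‖gradient f (x + t • v) - gradient f x‖ ≤ M * (t * ‖v‖) := by
      have := hfl (x + t • v) x
      simpa [norm_smul, abs_of_nonneg ht.1] using this
    have h4 : ‖gradient f (x + t • v) - gradient f x‖ * ‖v‖ ≤ M * (t * ‖v‖) * ‖v‖ :=
      mul_le_mul_of_nonneg_right h3 (norm_nonneg v)
    nlinarith [norm_nonneg v]
  have hmono : (∫ t in (0 : ℝ)..1, (inner ℝ (gradient f (x + t • v)) v : ℝ))
      ≤ ∫ t in (0 : ℝ)..1, ((inner ℝ (gradient f x) v : ℝ) + M * t * ‖v‖ ^ 2) := by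
    apply intervalIntegral.integral_mono_on (by norm_num)
      (hcont.intervalIntegrable 0 1)
    · apply Continuous.intervalIntegrable
      continuity
    · exact hb
  have hval : (∫ t in (0 : ℝ)..1, ((inner ℝ (gradient f x) v : ℝ) + M * t * ‖v‖ ^ 2))
      = (inner ℝ (gradient f x) v : ℝ) + M / 2 * ‖v‖ ^ 2 := by
    have h1 : (fun t : ℝ => (inner ℝ (gradient f x) v : ℝ) + M * t * ‖v‖ ^ 2)
        = fun t : ℝ => (inner ℝ (gradient f x) v : ℝ) + (M * ‖v‖ ^ 2) * t := by
      funext t; ring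
    rw [h1, intervalIntegral.integral_add intervalIntegrable_const
      ((by continuity : Continuous fun t : ℝ => M * ‖v‖ ^ 2 * t).intervalIntegrable 0 1),
      intervalIntegral.integral_const, intervalIntegral.integral_const_mul,
      integral_id]
    norm_num
    ring
  linarith [key, hmono, hval]


set_option maxHeartbeats 1000000 in
/-- one-step discretization error bound for `V = f + g` with
`f` having `M`-Lipschitz gradient and `g` `L`-Lipschitz, under Gaussian noise
`η ~ N(0, 2h·I_d)` independent of `X`. -/
theorem delta_bound_smooth_plus_lipschitz
    {d : ℕ} (f g : Euc d → ℝ) (M L : ℝ)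
    (hfd : Differentiable ℝ f)
    (hfl : ∀ x y, ‖gradient f x - gradient f y‖ ≤ M * ‖x - y‖)
    (hgl : ∀ x y, |g x - g y| ≤ L * ‖x - y‖)
    {Ω : Type} [MeasurableSpace Ω] (P : Measure Ω) [IsProbabilityMeasure P]
    (X η : Ω → Euc d) (hX : AEMeasurable X P) (hη : AEMeasurable η P)
    (h : ℝ) (hh : 0 < h)
    (hlaw : Measure.map η P = gaussCov d (2 * h))
    (hindep : ProbabilityTheory.IndepFun X η P)
    (hint1 : Integrable (fun ω => f (X ω) + g (X ω)) P)
    (hint2 : Integrable (fun ω => f (X ω + η ω) + g (X ω + η ω)) P)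
    (hint3 : Integrable (fun ω => gradient f (X ω)) P) :
    (∫ ω, (f (X ω + η ω) + g (X ω + η ω)) ∂P) - ∫ ω, (f (X ω) + g (X ω)) ∂P ≤
      M * h * d + L * Real.sqrt (2 * h * d) := by
  classical
  rcases Nat.eq_zero_or_pos d with hd0 | hdpos
  · -- degenerate case d = 0
    subst hd0
    haveI : Subsingleton (Euc 0) :=
      (MeasurableEquiv.toLp 2 (Fin 0 → ℝ)).symm.toEquiv.subsingleton
    have hsub : ∀ ω, X ω + η ω = X ω := fun ω => Subsingleton.elim _ _
    simp only [hsub]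
    simp [Real.sqrt_eq_zero']
  -- main case d ≥ 1
  have hM : 0 ≤ M := by
    have h1 := hfl (EuclideanSpace.single ⟨0, hdpos⟩ (1 : ℝ)) 0
    have h2 : (0:ℝ) ≤ M * ‖EuclideanSpace.single (⟨0, hdpos⟩ : Fin d) (1 : ℝ) - 0‖ :=
      le_trans (norm_nonneg _) h1
    have h3 : ‖EuclideanSpace.single (⟨0, hdpos⟩ : Fin d) (1 : ℝ) - 0‖ = 1 := by
      rw [sub_zero, EuclideanSpace.norm_single, norm_one]
    rw [h3, mul_one] at h2
    exact h2
  have hL : 0 ≤ L := by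
    have h1 := hgl (EuclideanSpace.single ⟨0, hdpos⟩ (1 : ℝ)) 0
    have h3 : ‖EuclideanSpace.single (⟨0, hdpos⟩ : Fin d) (1 : ℝ) - 0‖ = 1 := by
      rw [sub_zero, EuclideanSpace.norm_single, norm_one]
    rw [h3, mul_one] at h1
    exact le_trans (abs_nonneg _) h1
  have hs : 0 < 2 * h := by positivity
  have hprob : IsProbabilityMeasure (gaussCov d (2 * h)) := by
    rw [← hlaw]; exact Measure.isProbabilityMeasure_map hη
  obtain ⟨hI2, hE2, hIi, hEi⟩ := aux_gaussCov_facts d (2 * h) hs hprob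
  -- measurability helpers
  have hmeval : ∀ i : Fin d, Measurable fun x : Euc d => x i := fun i =>
    (measurable_pi_apply i).comp ((MeasurableEquiv.toLp 2 (Fin d → ℝ)).symm).measurable
  have hgradcont : Continuous (gradient f) :=
    (LipschitzWith.of_dist_le_mul (K := M.toNNReal) fun a b => by
      simpa [dist_eq_norm, Real.coe_toNNReal M hM] using hfl a b).continuous
  -- law transfers
  have hηsq_int : Integrable (fun ω => ‖η ω‖ ^ 2) P := by
    have h1 : AEStronglyMeasurable (fun x : Euc d => ‖x‖ ^ 2) (Measure.map η P) :=
      (continuous_norm.pow 2).aestronglyMeasurable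
    have := (integrable_map_measure h1 hη).mp (by rwa [hlaw])
    exact this
  have hηsq_eq : (∫ ω, ‖η ω‖ ^ 2 ∂P) = 2 * h * d := by
    have h1 : AEStronglyMeasurable (fun x : Euc d => ‖x‖ ^ 2) (Measure.map η P) :=
      (continuous_norm.pow 2).aestronglyMeasurable
    have h2 := integral_map hη h1
    rw [hlaw] at h2
    rw [← h2, hE2]
  have hηnorm_int : Integrable (fun ω => ‖η ω‖) P := by
    apply Integrable.mono ((integrable_const (1:ℝ)).add hηsq_int)
      (continuous_norm.aestronglyMeasurable.comp_aemeasurable hη)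
    filter_upwards with ω
    have h1 : ‖η ω‖ ≤ 1 + ‖η ω‖ ^ 2 := by nlinarith [norm_nonneg (η ω)]
    have h2 : (0:ℝ) ≤ 1 + ‖η ω‖ ^ 2 := by positivity
    simp only [Function.comp_apply, Pi.add_apply, norm_norm]
    rw [Real.norm_of_nonneg h2]
    exact h1
  have hηi_int : ∀ i : Fin d, Integrable (fun ω => η ω i) P := by
    intro i
    have h1 : AEStronglyMeasurable (fun x : Euc d => x i) (Measure.map η P) :=
      (hmeval i).aestronglyMeasurable
    exact (integrable_map_measure h1 hη).mp (by rw [hlaw]; exact hIi i)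
  have hηi_mean : ∀ i : Fin d, (∫ ω, η ω i ∂P) = 0 := by
    intro i
    have h1 : AEStronglyMeasurable (fun x : Euc d => x i) (Measure.map η P) :=
      (hmeval i).aestronglyMeasurable
    have h2 := integral_map hη h1
    rw [hlaw] at h2
    rw [← h2, hEi i]
  -- gradient components
  have hgradi_meas : ∀ i : Fin d, Measurable fun x : Euc d => gradient f x i :=
    fun i => (hmeval i).comp hgradcont.measurable
  have habs : ∀ (x : Euc d) (i : Fin d), |x i| ≤ ‖x‖ := by
    intro x i
    rw [EuclideanSpace.norm_eq, ← Real.sqrt_sq_eq_abs]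
    apply Real.sqrt_le_sqrt
    have h6 := Finset.single_le_sum (f := fun j => ‖x j‖ ^ 2)
      (fun j _ => sq_nonneg _) (Finset.mem_univ i)
    simpa [sq_abs] using h6
  have hgradi_int : ∀ i : Fin d, Integrable (fun ω => gradient f (X ω) i) P := by
    intro i
    apply Integrable.mono hint3.norm
      (((hgradi_meas i).comp_aemeasurable hX).aestronglyMeasurable)
    filter_upwards with ω
    rw [Real.norm_eq_abs, Real.norm_of_nonneg (norm_nonneg _)]
    exact habs (gradient f (X ω)) i
  -- independence of components
  have hindep_i : ∀ i : Fin d, ProbabilityTheory.IndepFun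
      (fun ω => gradient f (X ω) i) (fun ω => η ω i) P :=
    fun i => hindep.comp (hgradi_meas i) (hmeval i)
  have hprod_int : ∀ i : Fin d, Integrable (fun ω => gradient f (X ω) i * η ω i) P :=
    fun i => (hindep_i i).integrable_mul (hgradi_int i) (hηi_int i)
  have hprod_mean : ∀ i : Fin d, (∫ ω, gradient f (X ω) i * η ω i ∂P) = 0 := by
    intro i
    have h5 := (hindep_i i).integral_mul_eq_mul_integral (hgradi_int i).aestronglyMeasurable
      (hηi_int i).aestronglyMeasurable
    calc (∫ ω, gradient f (X ω) i * η ω i ∂P)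
        = (∫ ω, gradient f (X ω) i ∂P) * ∫ ω, η ω i ∂P := h5
      _ = 0 := by rw [hηi_mean i, mul_zero]
  -- pointwise bound
  have hpt : ∀ ω, (f (X ω + η ω) + g (X ω + η ω)) - (f (X ω) + g (X ω)) ≤
      (∑ i, gradient f (X ω) i * η ω i) + (M / 2 * ‖η ω‖ ^ 2 + L * ‖η ω‖) := by
    intro ω
    have h1 := aux_descent f M hM hfd hfl (X ω) (η ω)
    have h2 : g (X ω + η ω) - g (X ω) ≤ L * ‖η ω‖ := by
      have h3 := (le_abs_self _).trans (hgl (X ω + η ω) (X ω))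
      simpa [add_sub_cancel_left] using h3
    have h4 : (inner ℝ (gradient f (X ω)) (η ω) : ℝ)
        = ∑ i, gradient f (X ω) i * η ω i := by
      simp [PiLp.inner_apply, RCLike.inner_apply, -inner_gradient_left, mul_comm]
    rw [h4] at h1
    linarith [h1, h2]
  set Y := fun ω => (∑ i, gradient f (X ω) i * η ω i)
      + (M / 2 * ‖η ω‖ ^ 2 + L * ‖η ω‖) with hYdef
  have hYint : Integrable Y P :=
    (integrable_finset_sum _ fun i _ => hprod_int i).add
      ((hηsq_int.const_mul _).add (hηnorm_int.const_mul _))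
  have hEY : (∫ ω, Y ω ∂P) = M / 2 * (2 * h * d) + L * ∫ ω, ‖η ω‖ ∂P := by
    simp only [hYdef]
    rw [integral_add (integrable_finset_sum _ fun i _ => hprod_int i)
      (show Integrable (fun ω => M / 2 * ‖η ω‖ ^ 2 + L * ‖η ω‖) P from
        (hηsq_int.const_mul _).add (hηnorm_int.const_mul _))]
    rw [integral_finset_sum _ fun i _ => hprod_int i]
    rw [Finset.sum_congr rfl fun i _ => hprod_mean i, Finset.sum_const, smul_zero]
    rw [integral_add
      (show Integrable (fun ω => M / 2 * ‖η ω‖ ^ 2) P from hηsq_int.const_mul _)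
      (show Integrable (fun ω => L * ‖η ω‖) P from hηnorm_int.const_mul _),
      integral_const_mul, integral_const_mul, hηsq_eq]
    ring
  have hEnorm_nonneg : 0 ≤ ∫ ω, ‖η ω‖ ∂P := integral_nonneg fun ω => norm_nonneg _
  have hEnorm_le : (∫ ω, ‖η ω‖ ∂P) ≤ Real.sqrt (2 * h * d) := by
    have haesm : AEStronglyMeasurable (fun ω => ‖η ω‖) P :=
      (hη.norm).aestronglyMeasurable
    have hmem : MemLp (fun ω => ‖η ω‖) 2 P :=
      (memLp_two_iff_integrable_sq haesm).mpr hηsq_int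
    have hvar := ProbabilityTheory.variance_nonneg (fun ω => ‖η ω‖) P
    rw [ProbabilityTheory.variance_eq_sub hmem] at hvar
    simp only [Pi.pow_apply] at hvar
    rw [Real.le_sqrt hEnorm_nonneg (by positivity)]
    nlinarith [hvar, hηsq_eq]
  calc (∫ ω, (f (X ω + η ω) + g (X ω + η ω)) ∂P) - ∫ ω, (f (X ω) + g (X ω)) ∂P
      = ∫ ω, ((f (X ω + η ω) + g (X ω + η ω)) - (f (X ω) + g (X ω))) ∂P :=
        (integral_sub hint2 hint1).symm
    _ ≤ ∫ ω, Y ω ∂P := integral_mono (hint2.sub hint1) hYint hpt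
    _ = M / 2 * (2 * h * d) + L * ∫ ω, ‖η ω‖ ∂P := hEY
    _ ≤ M * h * d + L * Real.sqrt (2 * h * d) := by
        have h9 := mul_le_mul_of_nonneg_left hEnorm_le hL
        have h10 : M / 2 * (2 * h * (d : ℝ)) = M * h * d := by ring
        linarith [h9, h10]
end

section
/- Let μ and ν be probability measures on ℝ^d with finite second moments, with ν absolutely continuous w.r.t. Lebesgue measure and H(ν) < ∞. Let φ_t(x) = (4πt)^{−d/2} exp(−‖x‖²/(4t)) and suppose: (i) for all 0 < a < b, (1/2)·[W₂²(φ_b * μ, ν) − W₂²(φ_a * μ, ν)] ≤ (b−a)·H(ν) − ∫_a^b H(φ_t * μ) dt; (ii) t ↦ H(φ_t * μ) is non-increasing on (0,∞); (iii) W₂(φ_a * μ, μ) → 0 as a → 0. Then for every h > 0: (1/(2h))·[W₂²(φ_h * μ, ν) − W₂²(μ, ν)] ≤ H(ν) − H(φ_h * μ). -/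
open MeasureTheory Filter Set

open MeasureTheory Filter Set

/-- The heat flow at time `t` started from `μ`: convolution with the Gaussian
kernel `φ_t` (covariance `2t·I_d`). -/
noncomputable def heat {d : ℕ} (μ : Measure (Euc d)) (t : ℝ) : Measure (Euc d) :=
  mconv μ (gaussCov d (2 * t))

/-- The entropy functional `H(ρ) = ∫ ρ log ρ dx = ∫ log (dρ/dLeb) dρ`. -/
noncomputable def ent {d : ℕ} (ρ : Measure (Euc d)) : ℝ :=
  ∫ x, Real.log ((ρ.rnDeriv volume x).toReal) ∂ρ

open scoped ENNReal NNReal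

namespace DEVIAux

variable {d : ℕ}

lemma integrable_gauss (b : ℝ) (hb : 0 < b) :
    Integrable (fun x : Euc d => Real.exp (-b * ‖x‖ ^ 2)) := by
  have h := GaussianFourier.integrable_cexp_neg_mul_sq_norm_add
    (V := Euc d) (b := (b : ℂ)) (by simpa using hb) 0 (0 : Euc d)
  have h2 := h.re
  refine h2.congr (Eventually.of_forall fun x => ?_)
  have : (-(b:ℂ) * (‖x‖:ℂ) ^ 2 + 0 * (inner ℝ (0 : Euc d) x : ℝ)) = ((-b * ‖x‖^2 : ℝ) : ℂ) := by
    push_cast; ring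
  simp only [this, ← Complex.ofReal_exp]; exact Complex.ofReal_re _

lemma integral_gauss (b : ℝ) (hb : 0 < b) :
    ∫ x : Euc d, Real.exp (-b * ‖x‖ ^ 2) = (Real.pi / b) ^ ((d : ℝ) / 2) := by
  rw [GaussianFourier.integral_rexp_neg_mul_sq_norm (V := Euc d) hb]
  norm_num [finrank_euclideanSpace_fin]

lemma lintegral_ofReal_gauss (c b : ℝ) (hc : 0 ≤ c) (hb : 0 < b) :
    ∫⁻ x : Euc d, ENNReal.ofReal (c * Real.exp (-b * ‖x‖ ^ 2)) =
      ENNReal.ofReal (c * (Real.pi / b) ^ ((d : ℝ) / 2)) := by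
  rw [← ofReal_integral_eq_lintegral_ofReal (((integrable_gauss b hb).const_mul c))
    (Eventually.of_forall fun x => by positivity)]
  rw [integral_const_mul, integral_gauss b hb]

lemma gauss_density_eq (s : ℝ) (x : Euc d) :
    ENNReal.ofReal ((2 * Real.pi * s) ^ (-(d : ℝ) / 2) * Real.exp (-‖x‖ ^ 2 / (2 * s))) =
      ENNReal.ofReal ((2 * Real.pi * s) ^ (-(d : ℝ) / 2) *
        Real.exp (-(2 * s)⁻¹ * ‖x‖ ^ 2)) := by
  congr 2
  ring

lemma pi_div_inv (s c : ℝ) (hs : 0 < s) (hc : 0 < c) : Real.pi / (c * s)⁻¹ = c * Real.pi * s := by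
  field_simp

instance gaussCov_prob (s : ℝ) [hs : Fact (0 < s)] : IsProbabilityMeasure (gaussCov d s) := by
  have hs := hs.out
  constructor
  rw [gaussCov, withDensity_apply _ MeasurableSet.univ, Measure.restrict_univ]
  simp_rw [gauss_density_eq s]
  rw [lintegral_ofReal_gauss _ _ (by positivity) (by positivity)]
  rw [pi_div_inv s 2 hs two_pos]
  rw [← Real.rpow_add (by positivity),
    show (-(d:ℝ)/2 + (d:ℝ)/2) = 0 by ring, Real.rpow_zero, ENNReal.ofReal_one]

lemma ue_bound (u : ℝ) (hu : 0 ≤ u) : u * Real.exp (-u) ≤ (Real.exp 1)⁻¹ := by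
  have h1 : u ≤ Real.exp (u - 1) := by
    have := Real.add_one_le_exp (u - 1); linarith
  have h2 : Real.exp (u - 1) * Real.exp (-u) = (Real.exp 1)⁻¹ := by
    rw [← Real.exp_add, ← Real.exp_neg]; ring_nf
  calc u * Real.exp (-u) ≤ Real.exp (u - 1) * Real.exp (-u) := by
        exact mul_le_mul_of_nonneg_right h1 (Real.exp_nonneg _)
    _ = (Real.exp 1)⁻¹ := h2

lemma pointwise_bound {s : ℝ} (hs : 0 < s) {t : ℝ} (ht : 0 ≤ t) :
    t * Real.exp (-t / (2 * s)) ≤ (4 * s / Real.exp 1) * Real.exp (-t / (4 * s)) := by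
  have h4s : (0:ℝ) < 4 * s := by positivity
  have key : t * Real.exp (-t / (4 * s)) ≤ 4 * s / Real.exp 1 := by
    have := ue_bound (t / (4 * s)) (by positivity)
    have h' : t / (4 * s) * Real.exp (-(t / (4 * s))) ≤ (Real.exp 1)⁻¹ := this
    rw [div_mul_eq_mul_div, div_le_iff₀ h4s] at h'
    calc t * Real.exp (-t / (4 * s)) = t * Real.exp (-(t / (4 * s))) := by rw [neg_div]
      _ ≤ (Real.exp 1)⁻¹ * (4 * s) := h'
      _ = 4 * s / Real.exp 1 := by field_simp
  calc t * Real.exp (-t / (2 * s))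
      = (t * Real.exp (-t / (4 * s))) * Real.exp (-t / (4 * s)) := by
        rw [mul_assoc, ← Real.exp_add]
        congr 2
        field_simp
        ring
    _ ≤ (4 * s / Real.exp 1) * Real.exp (-t / (4 * s)) :=
        mul_le_mul_of_nonneg_right key (Real.exp_nonneg _)

/-- dimension constant for the Gaussian second moment bound. -/
noncomputable def Kd (d : ℕ) : ℝ := 4 / Real.exp 1 * 2 ^ ((d : ℝ) / 2)

lemma Kd_nonneg (d : ℕ) : 0 ≤ Kd d := by
  unfold Kd
  positivity

lemma gauss_moment (s : ℝ) (hs : 0 < s) :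
    ∫⁻ x, (‖x‖₊ : ℝ≥0∞) ^ 2 ∂(gaussCov d s) ≤ ENNReal.ofReal (s * Kd d) := by
  have hmeasd : Measurable fun x : Euc d =>
      ENNReal.ofReal ((2 * Real.pi * s) ^ (-(d : ℝ) / 2) * Real.exp (-‖x‖ ^ 2 / (2 * s))) := by
    apply Measurable.ennreal_ofReal
    exact (measurable_const.mul (((measurable_norm.pow_const 2).neg.div_const _).exp))
  rw [gaussCov, lintegral_withDensity_eq_lintegral_mul _ hmeasd
    ((measurable_nnnorm.coe_nnreal_ennreal).pow_const 2)]
  set c : ℝ := (2 * Real.pi * s) ^ (-(d : ℝ) / 2) with hc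
  have hc0 : 0 < c := by rw [hc]; positivity
  have hpt : ∀ x : Euc d,
      (ENNReal.ofReal (c * Real.exp (-‖x‖ ^ 2 / (2 * s))) * (‖x‖₊ : ℝ≥0∞) ^ 2) ≤
        ENNReal.ofReal ((c * (4 * s / Real.exp 1)) * Real.exp (-(4 * s)⁻¹ * ‖x‖ ^ 2)) := by
    intro x
    have hn : ((‖x‖₊ : ℝ≥0∞)) ^ 2 = ENNReal.ofReal (‖x‖ ^ 2) := by
      rw [ENNReal.ofReal_pow (norm_nonneg _), ofReal_norm, enorm_eq_nnnorm]
    rw [hn, ← ENNReal.ofReal_mul (by positivity)]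
    apply ENNReal.ofReal_le_ofReal
    have := pointwise_bound hs (t := ‖x‖ ^ 2) (by positivity)
    calc c * Real.exp (-‖x‖ ^ 2 / (2 * s)) * ‖x‖ ^ 2
        = c * (‖x‖ ^ 2 * Real.exp (-‖x‖ ^ 2 / (2 * s))) := by ring
      _ ≤ c * ((4 * s / Real.exp 1) * Real.exp (-‖x‖ ^ 2 / (4 * s))) := by
          exact mul_le_mul_of_nonneg_left this hc0.le
      _ = (c * (4 * s / Real.exp 1)) * Real.exp (-(4 * s)⁻¹ * ‖x‖ ^ 2) := by
          rw [show -(4 * s)⁻¹ * ‖x‖ ^ 2 = -‖x‖ ^ 2 / (4 * s) by ring]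
          ring
  calc ∫⁻ x, (fun x : Euc d => ENNReal.ofReal (c * Real.exp (-‖x‖ ^ 2 / (2 * s))) *
          ((‖x‖₊ : ℝ≥0∞)) ^ 2) x
      ≤ ∫⁻ x : Euc d, ENNReal.ofReal ((c * (4 * s / Real.exp 1)) *
          Real.exp (-(4 * s)⁻¹ * ‖x‖ ^ 2)) := lintegral_mono hpt
    _ = ENNReal.ofReal ((c * (4 * s / Real.exp 1)) * (Real.pi / (4 * s)⁻¹) ^ ((d : ℝ) / 2)) :=
        lintegral_ofReal_gauss _ _ (by positivity) (by positivity)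
    _ ≤ ENNReal.ofReal (s * Kd d) := by
        apply ENNReal.ofReal_le_ofReal
        rw [pi_div_inv s 4 hs (by norm_num)]
        have h4 : (4 : ℝ) * Real.pi * s = 2 * (2 * Real.pi * s) := by ring
        rw [h4, Real.mul_rpow (by norm_num) (by positivity)]
        rw [hc, show ((2 * Real.pi * s) ^ (-(d : ℝ) / 2) * (4 * s / Real.exp 1) *
            (2 ^ ((d:ℝ)/2) * (2 * Real.pi * s) ^ ((d : ℝ) / 2))) =
          ((2 * Real.pi * s) ^ (-(d : ℝ) / 2) * (2 * Real.pi * s) ^ ((d : ℝ) / 2)) *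
            ((4 * s / Real.exp 1) * 2 ^ ((d:ℝ)/2)) by ring]
        rw [← Real.rpow_add (by positivity), show (-(d:ℝ)/2 + (d:ℝ)/2) = 0 by ring,
          Real.rpow_zero, one_mul, Kd]
        have : s * (4 / Real.exp 1 * 2 ^ ((d:ℝ)/2)) = 4 * s / Real.exp 1 * 2 ^ ((d:ℝ)/2) := by
          ring
        rw [this]

noncomputable def cost {d : ℕ} (γ : Measure (Euc d × Euc d)) : ℝ≥0∞ :=
  ∫⁻ p, (‖p.1 - p.2‖₊ : ENNReal) ^ 2 ∂γ

def Cpl (μ ν : Measure (Euc d)) : Set (Measure (Euc d × Euc d)) :=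
  {γ | γ.map Prod.fst = μ ∧ γ.map Prod.snd = ν}

lemma sq_coe_bound (x y : ℝ≥0) :
    ((x + y : ℝ≥0) : ℝ≥0∞) ^ 2 ≤ 2 * (x : ℝ≥0∞) ^ 2 + 2 * (y : ℝ≥0∞) ^ 2 := by
  have h : (x + y) ^ 2 ≤ 2 * x ^ 2 + 2 * y ^ 2 := by
    rw [← NNReal.coe_le_coe]
    push_cast
    nlinarith [sq_nonneg ((x:ℝ) - (y:ℝ))]
  calc ((x + y : ℝ≥0) : ℝ≥0∞) ^ 2 = (((x + y) ^ 2 : ℝ≥0) : ℝ≥0∞) := by push_cast; ring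
    _ ≤ ((2 * x ^ 2 + 2 * y ^ 2 : ℝ≥0) : ℝ≥0∞) := by exact_mod_cast ENNReal.coe_le_coe.2 h
    _ = 2 * (x : ℝ≥0∞) ^ 2 + 2 * (y : ℝ≥0∞) ^ 2 := by push_cast; ring

lemma moment_lt_top {ρ : Measure (Euc d)} (hρ : Integrable (fun x => ‖x‖ ^ 2) ρ) :
    ∫⁻ x, (‖x‖₊ : ℝ≥0∞) ^ 2 ∂ρ < ⊤ := by
  have h : ∫⁻ x, (‖(‖x‖ ^ 2 : ℝ)‖₊ : ℝ≥0∞) ∂ρ < ⊤ := hρ.hasFiniteIntegral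
  refine lt_of_eq_of_lt ?_ h
  congr 1 with x
  rw [nnnorm_pow, nnnorm_norm]
  push_cast
  ring

lemma cost_prod_lt_top (μ ν : Measure (Euc d)) [IsProbabilityMeasure μ] [IsProbabilityMeasure ν]
    (hμ : Integrable (fun x => ‖x‖ ^ 2) μ) (hν : Integrable (fun x => ‖x‖ ^ 2) ν) :
    cost (μ.prod ν) < ⊤ := by
  have hbd : ∀ p : Euc d × Euc d, (‖p.1 - p.2‖₊ : ℝ≥0∞) ^ 2 ≤
      2 * (‖p.1‖₊ : ℝ≥0∞) ^ 2 + 2 * (‖p.2‖₊ : ℝ≥0∞) ^ 2 := by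
    intro p
    refine le_trans ?_ (sq_coe_bound ‖p.1‖₊ ‖p.2‖₊)
    gcongr
    exact_mod_cast nnnorm_sub_le p.1 p.2
  have h1 : Measurable fun x : Euc d => (‖x‖₊ : ℝ≥0∞) ^ 2 :=
    (measurable_nnnorm.coe_nnreal_ennreal).pow_const 2
  calc cost (μ.prod ν) ≤ ∫⁻ p : Euc d × Euc d,
        (2 * (‖p.1‖₊ : ℝ≥0∞) ^ 2 + 2 * (‖p.2‖₊ : ℝ≥0∞) ^ 2) ∂(μ.prod ν) :=
        lintegral_mono hbd
    _ = 2 * ∫⁻ x, (‖x‖₊ : ℝ≥0∞) ^ 2 ∂μ + 2 * ∫⁻ y, (‖y‖₊ : ℝ≥0∞) ^ 2 ∂ν := by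
        rw [lintegral_add_left (f := fun p : Euc d × Euc d => 2 * (‖p.1‖₊ : ℝ≥0∞) ^ 2)
            (by fun_prop),
          lintegral_const_mul _ (f := fun p : Euc d × Euc d => (‖p.1‖₊ : ℝ≥0∞) ^ 2) (by fun_prop),
          lintegral_const_mul _ (f := fun p : Euc d × Euc d => (‖p.2‖₊ : ℝ≥0∞) ^ 2) (by fun_prop)]
        congr 1
        · congr 1
          rw [← lintegral_map h1 measurable_fst, Measure.map_fst_prod, measure_univ, one_smul]
        · congr 1
          rw [← lintegral_map h1 measurable_snd, Measure.map_snd_prod, measure_univ, one_smul]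
    _ < ⊤ := by
        have := moment_lt_top hμ
        have := moment_lt_top hν
        finiteness

lemma prod_mem_Cpl (μ ν : Measure (Euc d)) [IsProbabilityMeasure μ] [IsProbabilityMeasure ν] :
    μ.prod ν ∈ Cpl μ ν := by
  constructor <;> simp [Measure.map_fst_prod, Measure.map_snd_prod]

lemma eLpNorm_two_eq {α : Type*} [MeasurableSpace α] (π : Measure α)
    (u : α → Euc d) :
    eLpNorm u 2 π = (∫⁻ a, (‖u a‖₊ : ℝ≥0∞) ^ 2 ∂π) ^ (1 / 2 : ℝ) := by
  rw [eLpNorm_eq_lintegral_rpow_enorm_toReal two_ne_zero ENNReal.ofNat_ne_top]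
  rw [ENNReal.toReal_ofNat]
  congr 1
  congr 1 with a
  rw [← ENNReal.rpow_natCast]
  norm_num
  rfl

lemma sq_of_rpow_half (X : ℝ≥0∞) : (X ^ (1 / 2 : ℝ)) ^ (2 : ℝ) = X := by
  rw [← ENNReal.rpow_mul]
  norm_num

lemma prob_of_mem_Cpl {μ ν : Measure (Euc d)} [IsProbabilityMeasure μ]
    {γ : Measure (Euc d × Euc d)} (hγ : γ ∈ Cpl μ ν) : IsProbabilityMeasure γ := by
  constructor
  have h := congrArg (fun m : Measure (Euc d) => m univ) hγ.1
  simp only [Measure.map_apply measurable_fst MeasurableSet.univ, preimage_univ] at h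
  rw [h, measure_univ]

lemma coupling_step (μ ν G : Measure (Euc d)) [IsProbabilityMeasure μ]
    [IsProbabilityMeasure G] (γ : Measure (Euc d × Euc d)) (hγ : γ ∈ Cpl μ ν) :
    (γ.prod G).map (fun p : (Euc d × Euc d) × Euc d => (p.1.1 + p.2, p.1.2)) ∈
        Cpl (mconv μ G) ν ∧
      cost ((γ.prod G).map (fun p : (Euc d × Euc d) × Euc d => (p.1.1 + p.2, p.1.2))) ≤
        (cost γ ^ (1 / 2 : ℝ) + (∫⁻ x, (‖x‖₊ : ℝ≥0∞) ^ 2 ∂G) ^ (1 / 2 : ℝ)) ^ (2 : ℝ) := by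
  haveI : IsProbabilityMeasure γ := prob_of_mem_Cpl hγ
  set T : (Euc d × Euc d) × Euc d → Euc d × Euc d := fun p => (p.1.1 + p.2, p.1.2) with hT
  have hTm : Measurable T :=
    ((measurable_fst.comp measurable_fst).add measurable_snd).prodMk
      (measurable_snd.comp measurable_fst)
  set π := γ.prod G with hπ
  have hmem : (γ.prod G).map T ∈ Cpl (mconv μ G) ν := by
    constructor
    · rw [Measure.map_map measurable_fst hTm]
      have h1 : mconv μ G = ((γ.prod G).map (Prod.map Prod.fst id)).map
          (fun q : Euc d × Euc d => q.1 + q.2) := by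
        rw [← Measure.map_prod_map _ _ measurable_fst measurable_id, hγ.1, Measure.map_id]
        rfl
      rw [h1, Measure.map_map (g := fun q : Euc d × Euc d => q.1 + q.2) (measurable_fst.add measurable_snd)
        (measurable_fst.prodMap measurable_id)]
      rfl
    · rw [Measure.map_map measurable_snd hTm]
      have h2 : (Prod.snd ∘ T) = (Prod.snd ∘ (Prod.fst : (Euc d × Euc d) × Euc d →
          Euc d × Euc d)) := rfl
      rw [h2, ← Measure.map_map measurable_snd measurable_fst, Measure.map_fst_prod,
        measure_univ, one_smul, hγ.2]
  refine ⟨hmem, ?_⟩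
  set f : (Euc d × Euc d) × Euc d → Euc d := fun p => p.1.1 - p.1.2 with hf
  set g : (Euc d × Euc d) × Euc d → Euc d := fun p => p.2 with hg
  have hfm : Measurable f := (measurable_fst.comp measurable_fst).sub
    (measurable_snd.comp measurable_fst)
  have hgm : Measurable g := measurable_snd
  have hcostnn : Measurable fun q : Euc d × Euc d => (‖q.1 - q.2‖₊ : ℝ≥0∞) ^ 2 :=
    ((measurable_fst.sub measurable_snd).nnnorm.coe_nnreal_ennreal).pow_const 2
  have hcost : cost ((γ.prod G).map T) = ∫⁻ p, (‖f p + g p‖₊ : ℝ≥0∞) ^ 2 ∂π := by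
    rw [cost, lintegral_map hcostnn hTm]
    congr 1 with p
    have : (T p).1 - (T p).2 = f p + g p := by
      show (p.1.1 + p.2) - p.1.2 = (p.1.1 - p.1.2) + p.2
      abel
    rw [this]
  have hsum : cost ((γ.prod G).map T) = eLpNorm (f + g) 2 π ^ (2 : ℝ) := by
    rw [hcost, eLpNorm_two_eq, sq_of_rpow_half]
    rfl
  have hA : eLpNorm f 2 π = cost γ ^ (1 / 2 : ℝ) := by
    rw [eLpNorm_two_eq]
    congr 1
    rw [show (fun p : (Euc d × Euc d) × Euc d => (‖f p‖₊ : ℝ≥0∞) ^ 2) =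
        (fun q : Euc d × Euc d => (‖q.1 - q.2‖₊ : ℝ≥0∞) ^ 2) ∘ Prod.fst from rfl]
    rw [show (∫⁻ p, ((fun q : Euc d × Euc d => (‖q.1 - q.2‖₊ : ℝ≥0∞) ^ 2) ∘ Prod.fst) p ∂π) =
        ∫⁻ p, (fun q : Euc d × Euc d => (‖q.1 - q.2‖₊ : ℝ≥0∞) ^ 2) p.1 ∂π from rfl]
    rw [← lintegral_map hcostnn measurable_fst, hπ, Measure.map_fst_prod, measure_univ, one_smul]
    rfl
  have hB : eLpNorm g 2 π = (∫⁻ x, (‖x‖₊ : ℝ≥0∞) ^ 2 ∂G) ^ (1 / 2 : ℝ) := by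
    rw [eLpNorm_two_eq]
    congr 1
    have hm : Measurable fun x : Euc d => (‖x‖₊ : ℝ≥0∞) ^ 2 :=
      (measurable_nnnorm.coe_nnreal_ennreal).pow_const 2
    rw [← lintegral_map hm measurable_snd, hπ, Measure.map_snd_prod, measure_univ, one_smul]
  have htri : eLpNorm (f + g) 2 π ≤ eLpNorm f 2 π + eLpNorm g 2 π :=
    eLpNorm_add_le hfm.aestronglyMeasurable hgm.aestronglyMeasurable one_le_two
  rw [hsum, ← hA, ← hB]
  exact ENNReal.rpow_le_rpow htri (by norm_num)

lemma W2sq_eq {d : ℕ} (μ ν : Measure (Euc d)) :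
    W2sq μ ν = (⨅ γ ∈ Cpl μ ν, cost γ).toReal := rfl

lemma rpow_two_eq_sq (x : ℝ) : x ^ (2 : ℝ) = x ^ 2 := by
  rw [show (2:ℝ) = ((2:ℕ):ℝ) by norm_num, Real.rpow_natCast]

end DEVIAux

open DEVIAux


/-- the integrated EVI for the heat flow, together with the
monotonicity of the entropy and continuity at time `0`, yields the discrete
one-step evolution variational inequality for the diffusion step. -/
theorem discrete_EVI_heat_step
    {d : ℕ} (μ ν : Measure (Euc d))
    [IsProbabilityMeasure μ] [IsProbabilityMeasure ν]
    (hμsec : Integrable (fun x => ‖x‖ ^ 2) μ) (hνsec : Integrable (fun x => ‖x‖ ^ 2) ν)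
    (hνac : ν ≪ volume)
    (hνent : Integrable (fun x => Real.log ((ν.rnDeriv volume x).toReal)) ν)
    (hEVI : ∀ a b : ℝ, 0 < a → a < b →
      1 / 2 * (W2sq (heat μ b) ν - W2sq (heat μ a) ν) ≤
        (b - a) * ent ν - ∫ t in a..b, ent (heat μ t))
    (hmono : AntitoneOn (fun t => ent (heat μ t)) (Set.Ioi 0))
    (hcont : Tendsto (fun a => W2 (heat μ a) μ) (nhdsWithin 0 (Set.Ioi 0)) (nhds 0)) :
    ∀ h : ℝ, 0 < h →
      1 / (2 * h) * (W2sq (heat μ h) ν - W2sq μ ν) ≤ ent ν - ent (heat μ h) := by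
  intro h hh
  set I0 : ℝ≥0∞ := ⨅ γ ∈ Cpl μ ν, cost γ with hI0
  have hI0top : I0 ≠ ⊤ :=
    (lt_of_le_of_lt (iInf₂_le _ (prod_mem_Cpl μ ν)) (cost_prod_lt_top μ ν hμsec hνsec)).ne
  have hW0 : W2sq μ ν = I0.toReal := W2sq_eq μ ν
  have hW0nonneg : (0:ℝ) ≤ W2sq μ ν := by rw [hW0]; exact ENNReal.toReal_nonneg
  set E : ℝ := ent ν - ent (heat μ h) with hEdef
  have stepA : ∀ a ∈ Set.Ioo (0:ℝ) h, W2sq (heat μ h) ν ≤ W2sq (heat μ a) ν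
      + 2 * (h - a) * E := by
    intro a ha
    have hEVIa := hEVI a h ha.1 ha.2
    have hsub : Set.uIcc a h ⊆ Set.Ioi (0:ℝ) := by
      rw [Set.uIcc_of_le ha.2.le]
      exact fun x hx => lt_of_lt_of_le ha.1 hx.1
    have hint : IntervalIntegrable (fun t => ent (heat μ t)) volume a h :=
      (hmono.mono hsub).intervalIntegrable
    have hlow : (h - a) * ent (heat μ h) ≤ ∫ t in a..h, ent (heat μ t) := by
      have hmon := intervalIntegral.integral_mono_on (μ := volume) ha.2.le
        (intervalIntegrable_const (c := ent (heat μ h))) hint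
        (fun x hx => hmono (lt_of_lt_of_le ha.1 hx.1) hh hx.2)
      simpa [smul_eq_mul] using hmon
    simp only [hEdef]
    nlinarith [hEVIa, hlow]
  have stepB : ∀ ε : ℝ, 0 < ε → ∀ a : ℝ, 0 < a →
      W2sq (heat μ a) ν ≤ (Real.sqrt (W2sq μ ν + ε) + Real.sqrt (2 * a * Kd d)) ^ 2 := by
    intro ε hε a ha
    haveI : Fact (0 < 2 * a) := ⟨by linarith⟩
    set G := gaussCov d (2 * a) with hG
    set m : ℝ≥0∞ := ∫⁻ x, (‖x‖₊ : ℝ≥0∞) ^ 2 ∂G with hm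
    have hmle : m ≤ ENNReal.ofReal (2 * a * Kd d) := gauss_moment (2 * a) (by linarith)
    have hmtop : m ≠ ⊤ := (lt_of_le_of_lt hmle ENNReal.ofReal_lt_top).ne
    have hlt : I0 < I0 + ENNReal.ofReal ε :=
      ENNReal.lt_add_right hI0top (ne_of_gt (ENNReal.ofReal_pos.2 hε))
    rw [hI0] at hlt
    rw [iInf_lt_iff] at hlt
    obtain ⟨γ, hγlt⟩ := hlt
    have hγmem : γ ∈ Cpl μ ν := by
      by_contra hn
      rw [iInf_neg hn] at hγlt
      exact (not_top_lt hγlt)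
    rw [iInf_pos hγmem] at hγlt
    obtain ⟨hmem, hle⟩ := coupling_step μ ν G γ hγmem
    have hIa2 : (⨅ γ' ∈ Cpl (heat μ a) ν, cost γ') ≤
        ((I0 + ENNReal.ofReal ε) ^ (1/2:ℝ) + m ^ (1/2:ℝ)) ^ (2:ℝ) := by
      refine le_trans (le_trans (iInf₂_le _ hmem) hle)
        (ENNReal.rpow_le_rpow (add_le_add_left
          (ENNReal.rpow_le_rpow hγlt.le (by norm_num)) _) (by norm_num))
    have hXtop : (I0 + ENNReal.ofReal ε) ^ (1/2:ℝ) ≠ ⊤ :=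
      ENNReal.rpow_ne_top_of_nonneg (by norm_num)
        (ENNReal.add_ne_top.2 ⟨hI0top, ENNReal.ofReal_ne_top⟩)
    have hYtop : m ^ (1/2:ℝ) ≠ ⊤ := ENNReal.rpow_ne_top_of_nonneg (by norm_num) hmtop
    have hfin : ((I0 + ENNReal.ofReal ε) ^ (1/2:ℝ) + m ^ (1/2:ℝ)) ^ (2:ℝ) ≠ ⊤ :=
      ENNReal.rpow_ne_top_of_nonneg (by norm_num) (ENNReal.add_ne_top.2 ⟨hXtop, hYtop⟩)
    have h1 := ENNReal.toReal_mono hfin hIa2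
    rw [W2sq_eq (heat μ a) ν]
    refine le_trans h1 ?_
    rw [← ENNReal.toReal_rpow, ENNReal.toReal_add hXtop hYtop, ← ENNReal.toReal_rpow,
      ← ENNReal.toReal_rpow, ENNReal.toReal_add hI0top ENNReal.ofReal_ne_top,
      ENNReal.toReal_ofReal hε.le, rpow_two_eq_sq]
    rw [← Real.sqrt_eq_rpow, ← Real.sqrt_eq_rpow, ← hW0]
    have hmr : m.toReal ≤ 2 * a * Kd d := by
      have := ENNReal.toReal_mono ENNReal.ofReal_ne_top hmle
      rwa [ENNReal.toReal_ofReal (mul_nonneg (by linarith) (Kd_nonneg d))] at this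
    have hs1 : Real.sqrt m.toReal ≤ Real.sqrt (2 * a * Kd d) := Real.sqrt_le_sqrt hmr
    have hsq : Real.sqrt (W2sq μ ν + ε) + Real.sqrt m.toReal ≤
        Real.sqrt (W2sq μ ν + ε) + Real.sqrt (2 * a * Kd d) := by linarith
    exact pow_le_pow_left₀ (by positivity) hsq 2
  have key : ∀ ε : ℝ, 0 < ε →
      W2sq (heat μ h) ν ≤ (W2sq μ ν + 2 * h * E) + ε := by
    intro ε hε
    have hev : ∀ᶠ a in nhdsWithin 0 (Set.Ioo 0 h), W2sq (heat μ h) ν ≤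
        (Real.sqrt (W2sq μ ν + ε) + Real.sqrt (2 * a * Kd d)) ^ 2 + 2 * (h - a) * E := by
      filter_upwards [self_mem_nhdsWithin] with a ha
      have h1 := stepA a ha
      have h2 := stepB ε hε a ha.1
      linarith
    haveI : (nhdsWithin (0:ℝ) (Set.Ioo 0 h)).NeBot := left_nhdsWithin_Ioo_neBot hh
    have hcontF : Tendsto (fun a : ℝ => (Real.sqrt (W2sq μ ν + ε) +
        Real.sqrt (2 * a * Kd d)) ^ 2 + 2 * (h - a) * E) (nhdsWithin 0 (Set.Ioo 0 h))
        (nhds ((Real.sqrt (W2sq μ ν + ε) + Real.sqrt (2 * 0 * Kd d)) ^ 2 + 2 * (h - 0) * E)) := by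
      apply Tendsto.mono_left _ nhdsWithin_le_nhds
      have c1 : Continuous fun a : ℝ => 2 * a * Kd d :=
        (continuous_const.mul continuous_id).mul continuous_const
      exact Continuous.tendsto
        (((continuous_const.add (Real.continuous_sqrt.comp c1)).pow 2).add
          ((continuous_const.mul (continuous_const.sub continuous_id)).mul continuous_const)) 0
    have hlim := ge_of_tendsto hcontF hev
    rw [show (2 * (0:ℝ) * Kd d) = 0 by ring, Real.sqrt_zero, add_zero, sub_zero,
      Real.sq_sqrt (by linarith)] at hlim
    linarith
  have hfin2 : W2sq (heat μ h) ν - W2sq μ ν ≤ 2 * h * E :=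
    by linarith [le_of_forall_pos_le_add key]
  have h2h : (0:ℝ) < 2 * h := by linarith
  calc 1 / (2 * h) * (W2sq (heat μ h) ν - W2sq μ ν)
      ≤ 1 / (2 * h) * (2 * h * E) := by
        apply mul_le_mul_of_nonneg_left hfin2 (by positivity)
    _ = E := by rw [← mul_assoc, one_div_mul_cancel h2h.ne', one_mul]
end
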